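/- For all weight modules V, W, U over Ū, the hexagon identities hold: c_{V,W⊗U} = (id_W ⊗ c_{V,U}) ∘ (c_{V,W} ⊗ id_U) and c_{V⊗W,U} = (c_{V,U} ⊗ id_W) ∘ (id_V ⊗ c_{W,U}), where all tensor products of weight modules carry the Ū-module structure induced by the coproduct Δ. -/

import Mathlib

noncomputable section

open scoped TensorProduct

namespace Unrolled

/-- `q^z = exp(π √-1 z / r)`. -/
def qc (r : ℕ) (z : ℂ) : ℂ := Complex.exp (Real.pi * Complex.I * z / r)

/-- `{z} = q^z - q^{-z}`. -/
def qbrk (r : ℕ) (z : ℂ) : ℂ := qc r z - qc r (-z)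

/-- `[z] = {z}/{1}`. -/
def qint (r : ℕ) (z : ℂ) : ℂ := qbrk r z / qbrk r 1

/-- `{n}! = ∏_{i=1}^n {i}`. -/
def qbrkFact (r n : ℕ) : ℂ := ∏ i ∈ Finset.range n, qbrk r ((i : ℂ) + 1)

/-- `[n]! = ∏_{i=1}^n [i]`. -/
def qintFact (r n : ℕ) : ℂ := ∏ i ∈ Finset.range n, qint r ((i : ℂ) + 1)

/-- The data of five operators `K, K⁻¹, H, E, F` on a complex vector space. -/
structure Ops (V : Type) [AddCommGroup V] [Module ℂ V] where
  K : Module.End ℂ V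
  Kinv : Module.End ℂ V
  H : Module.End ℂ V
  E : Module.End ℂ V
  F : Module.End ℂ V

/-- A module over the restricted unrolled quantum group `Ū = Ū_q^H(sl₂(ℂ))`:
five operators satisfying the defining relations of `Ū`. -/
structure Rep (r : ℕ) (V : Type) [AddCommGroup V] [Module ℂ V] extends Ops V where
  rel_KKinv : K * Kinv = 1
  rel_KinvK : Kinv * K = 1
  rel_HK : H * K = K * H
  rel_HE : H * E - E * H = (2 : ℂ) • E
  rel_HF : H * F - F * H = (-2 : ℂ) • F
  rel_KE : K * E = qc r 2 • (E * K)
  rel_KF : K * F = qc r (-2) • (F * K)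
  rel_EF : E * F - F * E = (qbrk r 1)⁻¹ • (K - Kinv)
  rel_Er : E ^ r = 0
  rel_Fr : F ^ r = 0

variable {V W U : Type} [AddCommGroup V] [Module ℂ V] [AddCommGroup W] [Module ℂ W]
  [AddCommGroup U] [Module ℂ U]

/-- A `Ū`-submodule: a subspace invariant under the five operators. -/
def Ops.Invariant (A : Ops V) (p : Submodule ℂ V) : Prop :=
  (∀ v ∈ p, A.K v ∈ p) ∧ (∀ v ∈ p, A.Kinv v ∈ p) ∧ (∀ v ∈ p, A.H v ∈ p) ∧
    (∀ v ∈ p, A.E v ∈ p) ∧ (∀ v ∈ p, A.F v ∈ p)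

/-- A simple `Ū`-module: nonzero, with no nonzero proper invariant subspace. -/
def Ops.IsSimple (A : Ops V) : Prop :=
  (∃ v : V, v ≠ 0) ∧ ∀ p : Submodule ℂ V, A.Invariant p → p = ⊥ ∨ p = ⊤

/-- A weight module: finite dimensional, a direct sum of `H`-eigenspaces, on which `K`
acts by `q^μ` on the `H`-eigenspace of eigenvalue `μ`. -/
structure IsWeight (r : ℕ) {V : Type} [AddCommGroup V] [Module ℂ V] (A : Ops V) : Prop where
  finDim : FiniteDimensional ℂ V
  sup_eigenspaces : (⨆ μ : ℂ, Module.End.eigenspace A.H μ) = ⊤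
  K_apply : ∀ (μ : ℂ), ∀ v ∈ Module.End.eigenspace A.H μ, A.K v = qc r μ • v

/-- A `Ū`-linear map. -/
def IsEquivariant (A : Ops V) (B : Ops W) (f : V →ₗ[ℂ] W) : Prop :=
  (∀ v, f (A.K v) = B.K (f v)) ∧ (∀ v, f (A.Kinv v) = B.Kinv (f v)) ∧
    (∀ v, f (A.H v) = B.H (f v)) ∧ (∀ v, f (A.E v) = B.E (f v)) ∧
    (∀ v, f (A.F v) = B.F (f v))

/-- Isomorphism of `Ū`-modules. -/
def OpsIso (A : Ops V) (B : Ops W) : Prop :=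
  ∃ e : V ≃ₗ[ℂ] W, IsEquivariant A B (e : V →ₗ[ℂ] W)

/-- The weight `α + r - 1 - 2i` of the basis vector `v_i` of the Verma module `V_α`. -/
def wt (r : ℕ) (α : ℂ) (i : ℕ) : ℂ := α + r - 1 - 2 * i

/-- The coefficient `{i}{i-α}/{1}²` occurring in `E v_i`. -/
def cE (r : ℕ) (α : ℂ) (i : ℕ) : ℂ := qbrk r i * qbrk r ((i : ℂ) - α) / qbrk r 1 ^ 2

/-- The Verma module `V_α` of highest weight `α + r - 1`, realized on `Fin r → ℂ`
with basis `v_0, …, v_{r-1}`. -/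
def vermaOps (r : ℕ) (α : ℂ) : Ops (Fin r → ℂ) where
  K := (Matrix.diagonal fun i : Fin r => qc r (wt r α (i : ℕ))).mulVecLin
  Kinv := (Matrix.diagonal fun i : Fin r => qc r (-wt r α (i : ℕ))).mulVecLin
  H := (Matrix.diagonal fun i : Fin r => wt r α (i : ℕ)).mulVecLin
  E := (Matrix.of fun i j : Fin r =>
    if (j : ℕ) = (i : ℕ) + 1 then cE r α (j : ℕ) else 0).mulVecLin
  F := (Matrix.of fun i j : Fin r =>
    if (i : ℕ) = (j : ℕ) + 1 then (1 : ℂ) else 0).mulVecLin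

/-- `α_{l,n} = (l-1)r + n + 1`, so that `S_n^{lr}` is a quotient of `V_{α_{l,n}}`. -/
def aln (r : ℕ) (l : ℤ) (n : ℕ) : ℂ := ((l : ℂ) - 1) * r + n + 1

/-- The simple module `S_n^{lr}` of highest weight `lr + n` and dimension `n+1`,
realized on `Fin (n+1) → ℂ`. -/
def smodOps (r : ℕ) (l : ℤ) (n : ℕ) : Ops (Fin (n + 1) → ℂ) where
  K := (Matrix.diagonal fun i : Fin (n + 1) => qc r (wt r (aln r l n) (i : ℕ))).mulVecLin
  Kinv := (Matrix.diagonal fun i : Fin (n + 1) => qc r (-wt r (aln r l n) (i : ℕ))).mulVecLin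
  H := (Matrix.diagonal fun i : Fin (n + 1) => wt r (aln r l n) (i : ℕ)).mulVecLin
  E := (Matrix.of fun i j : Fin (n + 1) =>
    if (j : ℕ) = (i : ℕ) + 1 then cE r (aln r l n) (j : ℕ) else 0).mulVecLin
  F := (Matrix.of fun i j : Fin (n + 1) =>
    if (i : ℕ) = (j : ℕ) + 1 then (1 : ℂ) else 0).mulVecLin

/-- `α ∈ (ℂ∖ℤ) ∪ rℤ`. -/
def goodα (r : ℕ) (α : ℂ) : Prop := (¬∃ n : ℤ, α = (n : ℂ)) ∨ ∃ m : ℤ, α = (r : ℂ) * m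

/-- The tensor product `Ū`-module structure induced by the coproduct `Δ`. -/
def tensorOps (A : Ops V) (B : Ops W) : Ops (V ⊗[ℂ] W) where
  K := TensorProduct.map A.K B.K
  Kinv := TensorProduct.map A.Kinv B.Kinv
  H := TensorProduct.map A.H (LinearMap.id : W →ₗ[ℂ] W) +
    TensorProduct.map (LinearMap.id : V →ₗ[ℂ] V) B.H
  E := TensorProduct.map (LinearMap.id : V →ₗ[ℂ] V) B.E + TensorProduct.map A.E B.K
  F := TensorProduct.map A.F (LinearMap.id : W →ₗ[ℂ] W) + TensorProduct.map A.Kinv B.F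

/-- The operator `Σ_{l=0}^{r-1} ({1}^{2l}/{l}!) q^{l(l-1)/2} E^l ⊗ F^l` on `V ⊗ W`. -/
def braidSum (r : ℕ) (A : Ops V) (B : Ops W) : Module.End ℂ (V ⊗[ℂ] W) :=
  ∑ l ∈ Finset.range r,
    (qbrk r 1 ^ (2 * l) / qbrkFact r l * qc r ((l : ℂ) * ((l : ℂ) - 1) / 2)) •
      TensorProduct.map (A.E ^ l) (B.F ^ l)

/-- The defining property of the operator `q^{H⊗H/2}` on `V ⊗ W`: it multiplies
`v ⊗ w` by `q^{λμ/2}` for weight vectors `v, w` of weights `λ, μ`. -/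
def IsqHH (r : ℕ) (A : Ops V) (B : Ops W) (Q : Module.End ℂ (V ⊗[ℂ] W)) : Prop :=
  ∀ (lam mu : ℂ) (v : V) (w : W),
    v ∈ Module.End.eigenspace A.H lam → w ∈ Module.End.eigenspace B.H mu →
      Q (v ⊗ₜ[ℂ] w) = qc r (lam * mu / 2) • (v ⊗ₜ[ℂ] w)

/-- The braiding `c_{V,W} = τ ∘ q^{H⊗H/2} ∘ Σ_l ({1}^{2l}/{l}!) q^{l(l-1)/2} E^l ⊗ F^l`,
where `Q` is the operator `q^{H⊗H/2}`. -/
def braidMap (r : ℕ) (A : Ops V) (B : Ops W) (Q : Module.End ℂ (V ⊗[ℂ] W)) :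
    V ⊗[ℂ] W →ₗ[ℂ] W ⊗[ℂ] V :=
  (TensorProduct.comm ℂ V W).toLinearMap ∘ₗ Q ∘ₗ braidSum r A B

/-!
On weight vectors both sides of each hexagon are double sums over pairs `(a, b)` of exponents.
The coproducts `Δ(F) = F ⊗ 1 + K⁻¹ ⊗ F` and `Δ(E) = 1 ⊗ E + E ⊗ K` are sums of two operators
that `q²`-commute, so the `q`-binomial theorem expands `Δ(F)^l` and `Δ(E)^l` with Gaussian
binomial coefficients `G(a, b)`. Matching coefficients then reduces to the multiplicativity
`C(a + b) G(a, b) = C(a) C(b) q^{2ab}` of the truncated `q`-exponential coefficients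
`C(l) = {1}^{2l} q^{l(l-1)/2} / {l}!`, plus bookkeeping of the `q^{H⊗H/2}` exponents; the terms
with `a + b ≥ r` vanish because `E^r = F^r = 0`.
-/

open Finset TensorProduct

theorem qc_add (r : ℕ) (x y : ℂ) : qc r (x + y) = qc r x * qc r y := by
  simp only [qc, ← Complex.exp_add]; ring_nf

theorem qc_zero (r : ℕ) : qc r 0 = 1 := by simp [qc]

theorem qc_ne_zero (r : ℕ) (x : ℂ) : qc r x ≠ 0 := Complex.exp_ne_zero _

theorem qc_natCast_mul (r n : ℕ) (x : ℂ) : qc r (n * x) = qc r x ^ n := by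
  simp only [qc, ← Complex.exp_nat_mul]; ring_nf

theorem qc_neg_mul_self (r : ℕ) (x : ℂ) : qc r (-x) * qc r x = 1 := by
  rw [← qc_add, neg_add_cancel, qc_zero]

theorem qc_natCast (r n : ℕ) : qc r n = qc r 1 ^ n := by
  rw [← qc_natCast_mul, mul_one]

theorem qbrk_natCast (r n : ℕ) : qbrk r n = qc r 1 ^ n - (qc r 1 ^ n)⁻¹ := by
  rw [qbrk, ← qc_natCast, eq_inv_of_mul_eq_one_left (qc_neg_mul_self r n)]

/-- `{a} ≠ 0` for `0 < a < r`, since `q` is a primitive `2r`-th root of unity. -/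
theorem qbrk_natCast_ne_zero {r a : ℕ} (ha : 0 < a) (har : a < r) : qbrk r a ≠ 0 := by
  have hr : (r : ℂ) ≠ 0 := by exact_mod_cast (ha.trans har).ne'
  intro h
  have h2a : qc r (a + a) = 1 := by
    rw [qc_add]; nth_rw 1 [sub_eq_zero.mp h]; exact qc_neg_mul_self r a
  obtain ⟨n, hn⟩ := Complex.exp_eq_one_iff.mp h2a
  have : (a : ℂ) = n * r := by
    field_simp at hn
    linear_combination hn / 2
  have hn' : (a : ℤ) = n * r := by exact_mod_cast this
  rcases le_or_gt n 0 with h0 | h0 <;> nlinarith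

theorem qbrkFact_succ (r n : ℕ) : qbrkFact r (n + 1) = qbrkFact r n * qbrk r (n + 1 : ℕ) := by
  rw [qbrkFact, prod_range_succ]; push_cast; rfl

theorem qbrkFact_ne_zero {r n : ℕ} (h : n < r) : qbrkFact r n ≠ 0 :=
  prod_ne_zero_iff.2 fun i hi => by
    exact_mod_cast qbrk_natCast_ne_zero i.succ_pos (by simp at hi; omega)

/-- The Gaussian binomial coefficient `[a + b choose a]` in `q²`. -/
def gaussBinom (r a b : ℕ) : ℂ :=
  qc r 1 ^ (a * b) * qbrkFact r (a + b) / (qbrkFact r a * qbrkFact r b)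

theorem gaussBinom_zero_left {r n : ℕ} (h : n < r) : gaussBinom r 0 n = 1 := by
  simp [gaussBinom, show qbrkFact r 0 = 1 from prod_range_zero _, qbrkFact_ne_zero h]

theorem gaussBinom_zero_right {r n : ℕ} (h : n < r) : gaussBinom r n 0 = 1 := by
  simp [gaussBinom, show qbrkFact r 0 = 1 from prod_range_zero _, qbrkFact_ne_zero h]

theorem gaussBinom_succ_succ {r a b : ℕ} (h : a + b + 2 < r) :
    gaussBinom r (a + 1) (b + 1) =
      gaussBinom r (a + 1) b + qc r 2 ^ (b + 1) * gaussBinom r a (b + 1) := by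
  have hq := qc_ne_zero r 1
  have hcleared : qc r 1 ^ ((a + 1) * (b + 1)) * qbrk r (a + b + 1 + 1 : ℕ) =
      qc r 1 ^ ((a + 1) * b) * qbrk r (b + 1 : ℕ) +
        qc r 1 ^ (2 * (b + 1) + a * (b + 1)) * qbrk r (a + 1 : ℕ) := by
    simp only [qbrk_natCast]
    field_simp
    ring
  have hq2 : qc r 2 = qc r 1 ^ 2 := by exact_mod_cast qc_natCast r 2
  have hFa := qbrkFact_ne_zero (show a < r by omega)
  have hFb := qbrkFact_ne_zero (show b < r by omega)
  have hFab := qbrkFact_ne_zero (show a + b < r by omega)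
  have hsa := qbrk_natCast_ne_zero (show 0 < a + 1 by omega) (show a + 1 < r by omega)
  have hsb := qbrk_natCast_ne_zero (show 0 < b + 1 by omega) (show b + 1 < r by omega)
  simp only [gaussBinom, hq2, show a + 1 + (b + 1) = a + b + 1 + 1 by omega,
    show a + 1 + b = a + b + 1 by omega, show a + (b + 1) = a + b + 1 by omega, qbrkFact_succ]
  field_simp
  linear_combination qbrk r (a + b + 1 : ℕ) * hcleared

def braidCoeff (r l : ℕ) : ℂ :=
  qbrk r 1 ^ (2 * l) / qbrkFact r l * qc r ((l : ℂ) * ((l : ℂ) - 1) / 2)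

theorem braidCoeff_add_mul_gaussBinom {r a b : ℕ} (h : a + b < r) :
    braidCoeff r (a + b) * gaussBinom r a b =
      braidCoeff r a * braidCoeff r b * qc r (2 * a * b) := by
  have hFa := qbrkFact_ne_zero (show a < r by omega)
  have hFb := qbrkFact_ne_zero (show b < r by omega)
  have hFab := qbrkFact_ne_zero h
  have hq : qc r 1 ^ (a * b) * qc r ((a + b : ℕ) * ((a + b : ℕ) - 1) / 2) =
      qc r (a * (a - 1) / 2) * qc r (b * (b - 1) / 2) * qc r (2 * a * b) := by
    rw [← qc_natCast, ← qc_add, ← qc_add, ← qc_add]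
    push_cast
    ring_nf
  simp only [braidCoeff, gaussBinom, pow_add, mul_add]
  field_simp
  linear_combination (qbrk r 1 ^ (2 * a) * qbrk r 1 ^ (2 * b)) * hq

theorem braidCoeff_add_mul_gaussBinom_mul {r a b : ℕ} (h : a + b < r) {x y z : ℂ}
    (hxyz : 2 * a * b + x = y + z) :
    braidCoeff r (a + b) * gaussBinom r a b * qc r x =
      braidCoeff r a * qc r y * (braidCoeff r b * qc r z) := by
  rw [braidCoeff_add_mul_gaussBinom h, mul_assoc, ← qc_add, hxyz, qc_add]
  ring

theorem add_pow_eq_sum_gaussBinom {A : Type*} [Ring A] [Algebra ℂ A] {r : ℕ} {X Y : A}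
    (hYX : Y * X = qc r 2 • (X * Y)) {n : ℕ} (hn : n < r) :
    (X + Y) ^ n = ∑ p ∈ antidiagonal n, gaussBinom r p.1 p.2 • (X ^ p.1 * Y ^ p.2) := by
  have hYpowX (b : ℕ) : Y ^ b * X = qc r 2 ^ b • (X * Y ^ b) := by
    induction b with
    | zero => simp
    | succ b ih =>
      rw [pow_succ, mul_assoc, hYX, mul_smul_comm, ← mul_assoc, ih, smul_mul_assoc, smul_smul,
        pow_succ, mul_assoc, mul_comm (qc r 2 ^ b)]
  induction n with
  | zero => simp [gaussBinom_zero_left hn]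
  | succ n ih =>
    -- the two halves of `(X + Y) ^ n * (X + Y)`, indexed by the exponents of their monomials
    let f₁ : ℕ × ℕ → A := fun
      | (0, _) => 0
      | (a + 1, b) => (gaussBinom r a b * qc r 2 ^ b) • (X ^ (a + 1) * Y ^ b)
    let f₂ : ℕ × ℕ → A := fun
      | (_, 0) => 0
      | (a, b + 1) => gaussBinom r a b • (X ^ a * Y ^ (b + 1))
    have h₁₂ : (X + Y) ^ (n + 1) = ∑ p ∈ antidiagonal (n + 1), (f₁ p + f₂ p) := by
      rw [sum_add_distrib, Nat.sum_antidiagonal_succ, Nat.sum_antidiagonal_succ', pow_succ,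
        ih (by omega), sum_mul]
      simp only [f₁, f₂, zero_add, ← sum_add_distrib, smul_mul_assoc, mul_add]
      refine sum_congr rfl fun p _ => ?_
      rw [mul_assoc, hYpowX, mul_smul_comm, smul_smul, ← mul_assoc, ← pow_succ, mul_assoc,
        ← pow_succ]
    rw [h₁₂]
    refine sum_congr rfl ?_
    rintro ⟨_ | a, _ | b⟩ hp <;> simp only [HasAntidiagonal.mem_antidiagonal] at hp
    · omega
    · simp [f₁, f₂, gaussBinom_zero_left (show b < r by omega),
        gaussBinom_zero_left (show b + 1 < r by omega)]
    · simp [f₁, f₂, gaussBinom_zero_right (show a < r by omega),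
        gaussBinom_zero_right (show a + 1 < r by omega)]
    · simp only [f₁, f₂, gaussBinom_succ_succ (show a + b + 2 < r by omega), ← add_smul]
      ring_nf

section Eigenspaces

variable {R M : Type*} [CommRing R] [AddCommGroup M] [Module R M]

theorem apply_mem_eigenspace_of_commutator {H F : Module.End R M} {c μ : R}
    (h : H * F - F * H = c • F) {v : M} (hv : v ∈ Module.End.eigenspace H μ) :
    F v ∈ Module.End.eigenspace H (μ + c) := by
  rw [Module.End.mem_eigenspace_iff] at hv ⊢
  have := LinearMap.congr_fun h v
  simp only [LinearMap.sub_apply, Module.End.mul_apply, LinearMap.smul_apply, hv,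
    map_smul] at this
  rw [add_smul, ← this]
  abel

theorem pow_apply_mem_eigenspace_of_commutator {H F : Module.End R M} {c μ : R}
    (h : H * F - F * H = c • F) {v : M} (hv : v ∈ Module.End.eigenspace H μ) (n : ℕ) :
    (F ^ n) v ∈ Module.End.eigenspace H (μ + n * c) := by
  induction n with
  | zero => simpa using hv
  | succ n ih =>
    rw [pow_succ', Module.End.mul_apply, Nat.cast_succ, add_one_mul, ← add_assoc]
    exact apply_mem_eigenspace_of_commutator h ih

theorem pow_apply_of_apply_eq_smul {T : Module.End R M} {c : R} {v : M} (h : T v = c • v)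
    (n : ℕ) : (T ^ n) v = c ^ n • v := by
  induction n with
  | zero => simp
  | succ n ih => rw [pow_succ, Module.End.mul_apply, h, map_smul, ih, smul_smul, ← pow_succ']

end Eigenspaces

theorem tensorOps_H_tmul_mem_eigenspace {A : Ops V} {B : Ops W} {lam mu : ℂ} {v : V} {w : W}
    (hv : v ∈ Module.End.eigenspace A.H lam) (hw : w ∈ Module.End.eigenspace B.H mu) :
    v ⊗ₜ[ℂ] w ∈ Module.End.eigenspace (tensorOps A B).H (lam + mu) := by
  rw [Module.End.mem_eigenspace_iff] at hv hw ⊢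
  simp [tensorOps, hv, hw, add_smul, smul_tmul']

theorem tensorOps_commutator_H_E {A : Ops V} {B : Ops W}
    (hA : A.H * A.E - A.E * A.H = (2 : ℂ) • A.E) (hB : B.H * B.E - B.E * B.H = (2 : ℂ) • B.E)
    (hHK : B.H * B.K = B.K * B.H) :
    (tensorOps A B).H * (tensorOps A B).E - (tensorOps A B).E * (tensorOps A B).H =
      (2 : ℂ) • (tensorOps A B).E := by
  have hA' (x : V) : A.H (A.E x) = A.E (A.H x) + (2 : ℂ) • A.E x := by
    simpa [sub_eq_iff_eq_add'] using LinearMap.congr_fun hA x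
  have hB' (y : W) : B.H (B.E y) = B.E (B.H y) + (2 : ℂ) • B.E y := by
    simpa [sub_eq_iff_eq_add'] using LinearMap.congr_fun hB y
  have hHK' (y : W) : B.H (B.K y) = B.K (B.H y) := LinearMap.congr_fun hHK y
  refine ext' fun x y => ?_
  simp [tensorOps, hA', hB', hHK', tmul_add, add_tmul,
    tmul_smul, ← smul_tmul']
  module

theorem tensorOps_commutator_H_F {A : Ops V} {B : Ops W}
    (hA : A.H * A.F - A.F * A.H = (-2 : ℂ) • A.F) (hB : B.H * B.F - B.F * B.H = (-2 : ℂ) • B.F)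
    (hHK : A.H * A.Kinv = A.Kinv * A.H) :
    (tensorOps A B).H * (tensorOps A B).F - (tensorOps A B).F * (tensorOps A B).H =
      (-2 : ℂ) • (tensorOps A B).F := by
  have hA' (x : V) : A.H (A.F x) = A.F (A.H x) + (-2 : ℂ) • A.F x := by
    simpa [sub_eq_iff_eq_add'] using LinearMap.congr_fun hA x
  have hB' (y : W) : B.H (B.F y) = B.F (B.H y) + (-2 : ℂ) • B.F y := by
    simpa [sub_eq_iff_eq_add'] using LinearMap.congr_fun hB y
  have hHK' (x : V) : A.H (A.Kinv x) = A.Kinv (A.H x) := LinearMap.congr_fun hHK x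
  refine ext' fun x y => ?_
  simp [tensorOps, hA', hB', hHK', tmul_add, add_tmul,
    neg_tmul, tmul_neg, tmul_smul,
    ← smul_tmul']
  abel

section RepFacts

variable {r : ℕ} (ρ : Rep r V)

theorem Rep.H_mul_Kinv : ρ.H * ρ.Kinv = ρ.Kinv * ρ.H :=
  calc ρ.H * ρ.Kinv = ρ.Kinv * (ρ.K * ρ.H) * ρ.Kinv := by
        rw [← mul_assoc, ρ.rel_KinvK, one_mul]
    _ = ρ.Kinv * ρ.H := by rw [← ρ.rel_HK, mul_assoc, mul_assoc, ρ.rel_KKinv, mul_one]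

theorem Rep.Kinv_mul_F : ρ.Kinv * ρ.F = qc r 2 • (ρ.F * ρ.Kinv) :=
  calc ρ.Kinv * ρ.F = ρ.Kinv * (qc r 2 • (qc r (-2) • (ρ.F * ρ.K))) * ρ.Kinv := by
        rw [smul_smul, mul_comm, qc_neg_mul_self, one_smul, mul_assoc, mul_assoc, ρ.rel_KKinv,
          mul_one]
    _ = qc r 2 • (ρ.F * ρ.Kinv) := by
        rw [← ρ.rel_KF, mul_smul_comm, smul_mul_assoc, ← mul_assoc, ρ.rel_KinvK, one_mul]

variable {ρ} {μ : ℂ} {v : V}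

theorem Rep.K_pow_apply (hρ : IsWeight r ρ.toOps) (hv : v ∈ Module.End.eigenspace ρ.H μ)
    (n : ℕ) : (ρ.K ^ n) v = qc r (n * μ) • v := by
  rw [pow_apply_of_apply_eq_smul (hρ.K_apply μ v hv), qc_natCast_mul]

theorem Rep.Kinv_pow_apply (hρ : IsWeight r ρ.toOps) (hv : v ∈ Module.End.eigenspace ρ.H μ)
    (n : ℕ) : (ρ.Kinv ^ n) v = qc r (-(n * μ)) • v := by
  have hKinv : ρ.Kinv v = qc r (-μ) • v :=
    calc ρ.Kinv v = ρ.Kinv (qc r (-μ) • ρ.K v) := by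
          rw [hρ.K_apply μ v hv, smul_smul, qc_neg_mul_self, one_smul]
      _ = qc r (-μ) • v := by
          rw [map_smul, ← Module.End.mul_apply, ρ.rel_KinvK, Module.End.one_apply]
  rw [pow_apply_of_apply_eq_smul hKinv, ← qc_natCast_mul, mul_neg]

end RepFacts

theorem tensorOps_F_pow_tmul {r : ℕ} {ρW : Rep r W} (ρU : Rep r U) (hW : IsWeight r ρW.toOps)
    {mu : ℂ} {w : W} (hw : w ∈ Module.End.eigenspace ρW.H mu) (u : U) {l : ℕ} (hl : l < r) :
    ((tensorOps ρW.toOps ρU.toOps).F ^ l) (w ⊗ₜ[ℂ] u) =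
      ∑ p ∈ antidiagonal l, (gaussBinom r p.1 p.2 * qc r (-(p.2 * mu))) •
        ((ρW.F ^ p.1) w ⊗ₜ[ℂ] (ρU.F ^ p.2) u) := by
  have hYX : map ρW.Kinv ρU.F * map ρW.F 1 = qc r 2 • (map ρW.F 1 * map ρW.Kinv ρU.F) := by
    rw [← TensorProduct.map_mul, ← TensorProduct.map_mul, ρW.Kinv_mul_F, map_smul_left,
      mul_one, one_mul]
  rw [show (tensorOps ρW.toOps ρU.toOps).F = map ρW.F 1 + map ρW.Kinv ρU.F from rfl,
    add_pow_eq_sum_gaussBinom hYX hl, LinearMap.sum_apply]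
  refine sum_congr rfl fun p _ => ?_
  rw [LinearMap.smul_apply, TensorProduct.map_pow, TensorProduct.map_pow,
    ← TensorProduct.map_mul, one_pow, one_mul, map_tmul, Module.End.mul_apply,
    ρW.Kinv_pow_apply hW hw, map_smul, ← smul_tmul', smul_smul]

theorem tensorOps_E_pow_tmul {r : ℕ} (ρV : Rep r V) {ρW : Rep r W} (hW : IsWeight r ρW.toOps)
    (v : V) {mu : ℂ} {w : W} (hw : w ∈ Module.End.eigenspace ρW.H mu) {l : ℕ} (hl : l < r) :
    ((tensorOps ρV.toOps ρW.toOps).E ^ l) (v ⊗ₜ[ℂ] w) =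
      ∑ p ∈ antidiagonal l, (gaussBinom r p.1 p.2 * qc r (p.2 * mu)) •
        ((ρV.E ^ p.2) v ⊗ₜ[ℂ] (ρW.E ^ p.1) w) := by
  have hYX : map ρV.E ρW.K * map 1 ρW.E = qc r 2 • (map 1 ρW.E * map ρV.E ρW.K) := by
    rw [← TensorProduct.map_mul, ← TensorProduct.map_mul, ρW.rel_KE, map_smul_right,
      mul_one, one_mul]
  rw [show (tensorOps ρV.toOps ρW.toOps).E = map 1 ρW.E + map ρV.E ρW.K from rfl,
    add_pow_eq_sum_gaussBinom hYX hl, LinearMap.sum_apply]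
  refine sum_congr rfl fun p _ => ?_
  rw [LinearMap.smul_apply, TensorProduct.map_pow, TensorProduct.map_pow,
    ← TensorProduct.map_mul, one_pow, one_mul, map_tmul, Module.End.mul_apply,
    ρW.K_pow_apply hW hw, map_smul, tmul_smul, smul_smul]

theorem braidMap_tmul {r : ℕ} {A : Ops V} {B : Ops W}
    (hA : A.H * A.E - A.E * A.H = (2 : ℂ) • A.E) (hB : B.H * B.F - B.F * B.H = (-2 : ℂ) • B.F)
    {Q : Module.End ℂ (V ⊗[ℂ] W)} (hQ : IsqHH r A B Q) {lam mu : ℂ} {v : V} {w : W}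
    (hv : v ∈ Module.End.eigenspace A.H lam) (hw : w ∈ Module.End.eigenspace B.H mu) :
    braidMap r A B Q (v ⊗ₜ[ℂ] w) =
      ∑ l ∈ range r, (braidCoeff r l * qc r ((lam + l * 2) * (mu + l * -2) / 2)) •
        ((B.F ^ l) w ⊗ₜ[ℂ] (A.E ^ l) v) := by
  simp only [braidMap, braidSum, LinearMap.comp_apply, LinearMap.sum_apply, map_sum]
  refine sum_congr rfl fun l _ => ?_
  rw [LinearMap.smul_apply, map_tmul, map_smul, map_smul,
    hQ _ _ _ _ (pow_apply_mem_eigenspace_of_commutator hA hv l)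
      (pow_apply_mem_eigenspace_of_commutator hB hw l),
    map_smul, LinearEquiv.coe_coe, comm_tmul, smul_smul, braidCoeff]

theorem sum_range_sum_antidiagonal {M : Type*} [AddCommMonoid M] {n : ℕ} {f : ℕ → ℕ → M}
    (hf : ∀ a < n, ∀ b < n, n ≤ a + b → f a b = 0) :
    ∑ l ∈ range n, ∑ p ∈ antidiagonal l, f p.1 p.2 = ∑ a ∈ range n, ∑ b ∈ range n, f a b :=
  calc ∑ l ∈ range n, ∑ p ∈ antidiagonal l, f p.1 p.2
      = ∑ l ∈ range n, ∑ a ∈ range (l + 1), f a (l - a) := by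
        simp only [Nat.sum_antidiagonal_eq_sum_range_succ f]
    _ = ∑ a ∈ range n, ∑ l ∈ Ico a n, f a (l - a) :=
        sum_comm' fun _ _ => by simp only [mem_range, mem_Ico]; omega
    _ = ∑ a ∈ range n, ∑ b ∈ range (n - a), f a b := by
        refine sum_congr rfl fun a _ => ?_
        rw [sum_Ico_eq_sum_range]
        simp only [Nat.add_sub_cancel_left]
    _ = ∑ a ∈ range n, ∑ b ∈ range n, f a b := by
        refine sum_congr rfl fun a ha => sum_subset (range_subset_range.2 (Nat.sub_le n a)) ?_
        intro b hb hb'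
        simp only [mem_range] at ha hb hb'
        exact hf a ha b hb (by omega)

theorem span_image2_tmul_eq_top {R M N : Type*} [CommRing R] [AddCommGroup M] [Module R M]
    [AddCommGroup N] [Module R N] {s : Set M} {t : Set N} (hs : Submodule.span R s = ⊤)
    (ht : Submodule.span R t = ⊤) :
    Submodule.span R (Set.image2 (· ⊗ₜ[R] ·) s t) = ⊤ := by
  have := Submodule.map₂_span_span R (TensorProduct.mk R M N) s t
  rw [hs, ht, TensorProduct.map₂_mk_top_top_eq_top] at this
  exact this.symm

theorem IsWeight.span_weightVectors_eq_top {r : ℕ} {A : Ops V} (hA : IsWeight r A) :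
    Submodule.span ℂ {v | ∃ μ, v ∈ Module.End.eigenspace A.H μ} = ⊤ := by
  rw [← hA.sup_eigenspaces, Submodule.iSup_eq_span]
  congr 1
  ext v
  simp

theorem braidMap_hexagon_forward {r : ℕ} (ρV : Rep r V) (ρW : Rep r W) (ρU : Rep r U)
    (hV : IsWeight r ρV.toOps) (hW : IsWeight r ρW.toOps) (hU : IsWeight r ρU.toOps)
    {QVW : Module.End ℂ (V ⊗[ℂ] W)} (hQVW : IsqHH r ρV.toOps ρW.toOps QVW)
    {QVU : Module.End ℂ (V ⊗[ℂ] U)} (hQVU : IsqHH r ρV.toOps ρU.toOps QVU)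
    {QA : Module.End ℂ (V ⊗[ℂ] (W ⊗[ℂ] U))}
    (hQA : IsqHH r ρV.toOps (tensorOps ρW.toOps ρU.toOps) QA) :
    braidMap r ρV.toOps (tensorOps ρW.toOps ρU.toOps) QA =
      (TensorProduct.assoc ℂ W U V).symm.toLinearMap
        ∘ₗ map LinearMap.id (braidMap r ρV.toOps ρU.toOps QVU)
        ∘ₗ (TensorProduct.assoc ℂ W V U).toLinearMap
        ∘ₗ map (braidMap r ρV.toOps ρW.toOps QVW) LinearMap.id
        ∘ₗ (TensorProduct.assoc ℂ V W U).symm.toLinearMap := by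
  refine LinearMap.ext_on (span_image2_tmul_eq_top hV.span_weightVectors_eq_top
    (span_image2_tmul_eq_top hW.span_weightVectors_eq_top hU.span_weightVectors_eq_top)) ?_
  rintro _ ⟨v, ⟨lam, hv⟩, _, ⟨w, ⟨mu, hw⟩, u, ⟨nu, hu⟩, rfl⟩, rfl⟩
  let f (a b : ℕ) : (W ⊗[ℂ] U) ⊗[ℂ] V :=
    (braidCoeff r a * qc r ((lam + a * 2) * (mu + a * -2) / 2) *
      (braidCoeff r b * qc r ((lam + a * 2 + b * 2) * (nu + b * -2) / 2))) •
      (((ρW.F ^ a) w ⊗ₜ[ℂ] (ρU.F ^ b) u) ⊗ₜ[ℂ] (ρV.E ^ (a + b)) v)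
  calc _ = ∑ l ∈ range r, ∑ p ∈ antidiagonal l, f p.1 p.2 := ?_
    _ = ∑ a ∈ range r, ∑ b ∈ range r, f a b :=
        sum_range_sum_antidiagonal fun a _ b _ hab => by
          simp only [f, pow_eq_zero_of_le hab ρV.rel_Er, LinearMap.zero_apply, tmul_zero,
            smul_zero]
    _ = _ := ?_
  · rw [braidMap_tmul ρV.rel_HE (tensorOps_commutator_H_F ρW.rel_HF ρU.rel_HF ρW.H_mul_Kinv)
      hQA hv (tensorOps_H_tmul_mem_eigenspace hw hu)]
    refine sum_congr rfl fun l hl => ?_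
    rw [tensorOps_F_pow_tmul ρU hW hw u (mem_range.1 hl), sum_tmul, smul_sum]
    refine sum_congr rfl fun p hp => ?_
    rw [HasAntidiagonal.mem_antidiagonal] at hp
    subst hp
    rw [← smul_tmul', smul_smul, mul_mul_mul_comm, ← qc_add]
    congr 1
    exact braidCoeff_add_mul_gaussBinom_mul (mem_range.1 hl) (by push_cast; ring)
  · simp only [LinearMap.comp_apply, LinearEquiv.coe_coe, assoc_symm_tmul, map_tmul,
      LinearMap.id_apply]
    rw [braidMap_tmul ρV.rel_HE ρW.rel_HF hQVW hv hw, sum_tmul, map_sum, map_sum, map_sum]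
    refine sum_congr rfl fun a _ => ?_
    rw [← smul_tmul', map_smul, map_smul, map_smul, assoc_tmul, map_tmul, LinearMap.id_apply,
      braidMap_tmul ρV.rel_HE ρU.rel_HF hQVU
        (pow_apply_mem_eigenspace_of_commutator ρV.rel_HE hv a) hu,
      tmul_sum, map_sum, smul_sum]
    refine sum_congr rfl fun b _ => ?_
    rw [tmul_smul, map_smul, assoc_symm_tmul, smul_smul, ← Module.End.mul_apply, ← pow_add,
      add_comm b a]

theorem braidMap_hexagon_reverse {r : ℕ} (ρV : Rep r V) (ρW : Rep r W) (ρU : Rep r U)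
    (hV : IsWeight r ρV.toOps) (hW : IsWeight r ρW.toOps) (hU : IsWeight r ρU.toOps)
    {QVU : Module.End ℂ (V ⊗[ℂ] U)} (hQVU : IsqHH r ρV.toOps ρU.toOps QVU)
    {QWU : Module.End ℂ (W ⊗[ℂ] U)} (hQWU : IsqHH r ρW.toOps ρU.toOps QWU)
    {QB : Module.End ℂ ((V ⊗[ℂ] W) ⊗[ℂ] U)}
    (hQB : IsqHH r (tensorOps ρV.toOps ρW.toOps) ρU.toOps QB) :
    braidMap r (tensorOps ρV.toOps ρW.toOps) ρU.toOps QB =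
      (TensorProduct.assoc ℂ U V W).toLinearMap
        ∘ₗ map (braidMap r ρV.toOps ρU.toOps QVU) LinearMap.id
        ∘ₗ (TensorProduct.assoc ℂ V U W).symm.toLinearMap
        ∘ₗ map LinearMap.id (braidMap r ρW.toOps ρU.toOps QWU)
        ∘ₗ (TensorProduct.assoc ℂ V W U).toLinearMap := by
  refine LinearMap.ext_on (span_image2_tmul_eq_top
    (span_image2_tmul_eq_top hV.span_weightVectors_eq_top hW.span_weightVectors_eq_top)
    hU.span_weightVectors_eq_top) ?_
  rintro _ ⟨_, ⟨v, ⟨lam, hv⟩, w, ⟨mu, hw⟩, rfl⟩, u, ⟨nu, hu⟩, rfl⟩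
  let f (a b : ℕ) : U ⊗[ℂ] (V ⊗[ℂ] W) :=
    (braidCoeff r a * qc r ((mu + a * 2) * (nu + a * -2) / 2) *
      (braidCoeff r b * qc r ((lam + b * 2) * (nu + a * -2 + b * -2) / 2))) •
      ((ρU.F ^ (a + b)) u ⊗ₜ[ℂ] ((ρV.E ^ b) v ⊗ₜ[ℂ] (ρW.E ^ a) w))
  calc _ = ∑ l ∈ range r, ∑ p ∈ antidiagonal l, f p.1 p.2 := ?_
    _ = ∑ a ∈ range r, ∑ b ∈ range r, f a b :=
        sum_range_sum_antidiagonal fun a _ b _ hab => by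
          simp only [f, pow_eq_zero_of_le hab ρU.rel_Fr, LinearMap.zero_apply, zero_tmul,
            smul_zero]
    _ = _ := ?_
  · rw [braidMap_tmul (tensorOps_commutator_H_E ρV.rel_HE ρW.rel_HE ρW.rel_HK) ρU.rel_HF
      hQB (tensorOps_H_tmul_mem_eigenspace hv hw) hu]
    refine sum_congr rfl fun l hl => ?_
    rw [tensorOps_E_pow_tmul ρV hW v hw (mem_range.1 hl), tmul_sum, smul_sum]
    refine sum_congr rfl fun p hp => ?_
    rw [HasAntidiagonal.mem_antidiagonal] at hp
    subst hp
    rw [tmul_smul, smul_smul, mul_mul_mul_comm, ← qc_add]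
    congr 1
    exact braidCoeff_add_mul_gaussBinom_mul (mem_range.1 hl) (by push_cast; ring)
  · simp only [LinearMap.comp_apply, LinearEquiv.coe_coe, assoc_tmul, map_tmul,
      LinearMap.id_apply]
    rw [braidMap_tmul ρW.rel_HE ρU.rel_HF hQWU hw hu, tmul_sum, map_sum, map_sum, map_sum]
    refine sum_congr rfl fun a _ => ?_
    rw [tmul_smul, map_smul, map_smul, map_smul, assoc_symm_tmul, map_tmul, LinearMap.id_apply,
      braidMap_tmul ρV.rel_HE ρU.rel_HF hQVU hv
        (pow_apply_mem_eigenspace_of_commutator ρU.rel_HF hu a),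
      sum_tmul, map_sum, smul_sum]
    refine sum_congr rfl fun b _ => ?_
    rw [← smul_tmul', map_smul, assoc_tmul, smul_smul, ← Module.End.mul_apply, ← pow_add,
      add_comm b a]

theorem stmt11_general (r : ℕ) (ρV : Rep r V) (ρW : Rep r W) (ρU : Rep r U)
    (hV : IsWeight r ρV.toOps) (hW : IsWeight r ρW.toOps) (hU : IsWeight r ρU.toOps)
    (QVW : Module.End ℂ (V ⊗[ℂ] W)) (hQVW : IsqHH r ρV.toOps ρW.toOps QVW)
    (QVU : Module.End ℂ (V ⊗[ℂ] U)) (hQVU : IsqHH r ρV.toOps ρU.toOps QVU)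
    (QWU : Module.End ℂ (W ⊗[ℂ] U)) (hQWU : IsqHH r ρW.toOps ρU.toOps QWU)
    (QA : Module.End ℂ (V ⊗[ℂ] (W ⊗[ℂ] U)))
    (hQA : IsqHH r ρV.toOps (tensorOps ρW.toOps ρU.toOps) QA)
    (QB : Module.End ℂ ((V ⊗[ℂ] W) ⊗[ℂ] U))
    (hQB : IsqHH r (tensorOps ρV.toOps ρW.toOps) ρU.toOps QB) :
    braidMap r ρV.toOps (tensorOps ρW.toOps ρU.toOps) QA =
      (TensorProduct.assoc ℂ W U V).symm.toLinearMap
        ∘ₗ TensorProduct.map (LinearMap.id : W →ₗ[ℂ] W)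
            (braidMap r ρV.toOps ρU.toOps QVU)
        ∘ₗ (TensorProduct.assoc ℂ W V U).toLinearMap
        ∘ₗ TensorProduct.map (braidMap r ρV.toOps ρW.toOps QVW)
            (LinearMap.id : U →ₗ[ℂ] U)
        ∘ₗ (TensorProduct.assoc ℂ V W U).symm.toLinearMap ∧
    braidMap r (tensorOps ρV.toOps ρW.toOps) ρU.toOps QB =
      (TensorProduct.assoc ℂ U V W).toLinearMap
        ∘ₗ TensorProduct.map (braidMap r ρV.toOps ρU.toOps QVU)
            (LinearMap.id : W →ₗ[ℂ] W)
        ∘ₗ (TensorProduct.assoc ℂ V U W).symm.toLinearMap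
        ∘ₗ TensorProduct.map (LinearMap.id : V →ₗ[ℂ] V)
            (braidMap r ρW.toOps ρU.toOps QWU)
        ∘ₗ (TensorProduct.assoc ℂ V W U).toLinearMap :=
  ⟨braidMap_hexagon_forward ρV ρW ρU hV hW hU hQVW hQVU hQA,
    braidMap_hexagon_reverse ρV ρW ρU hV hW hU hQVU hQWU hQB⟩

/-- The hexagon identities for the braiding `c` on weight modules. -/
theorem stmt11 (r : ℕ) (hr : 2 ≤ r) (ρV : Rep r V) (ρW : Rep r W) (ρU : Rep r U)
    (hV : IsWeight r ρV.toOps) (hW : IsWeight r ρW.toOps) (hU : IsWeight r ρU.toOps)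
    (QVW : Module.End ℂ (V ⊗[ℂ] W)) (hQVW : IsqHH r ρV.toOps ρW.toOps QVW)
    (QVU : Module.End ℂ (V ⊗[ℂ] U)) (hQVU : IsqHH r ρV.toOps ρU.toOps QVU)
    (QWU : Module.End ℂ (W ⊗[ℂ] U)) (hQWU : IsqHH r ρW.toOps ρU.toOps QWU)
    (QA : Module.End ℂ (V ⊗[ℂ] (W ⊗[ℂ] U)))
    (hQA : IsqHH r ρV.toOps (tensorOps ρW.toOps ρU.toOps) QA)
    (QB : Module.End ℂ ((V ⊗[ℂ] W) ⊗[ℂ] U))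
    (hQB : IsqHH r (tensorOps ρV.toOps ρW.toOps) ρU.toOps QB) :
    braidMap r ρV.toOps (tensorOps ρW.toOps ρU.toOps) QA =
      (TensorProduct.assoc ℂ W U V).symm.toLinearMap
        ∘ₗ TensorProduct.map (LinearMap.id : W →ₗ[ℂ] W)
            (braidMap r ρV.toOps ρU.toOps QVU)
        ∘ₗ (TensorProduct.assoc ℂ W V U).toLinearMap
        ∘ₗ TensorProduct.map (braidMap r ρV.toOps ρW.toOps QVW)
            (LinearMap.id : U →ₗ[ℂ] U)
        ∘ₗ (TensorProduct.assoc ℂ V W U).symm.toLinearMap ∧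
    braidMap r (tensorOps ρV.toOps ρW.toOps) ρU.toOps QB =
      (TensorProduct.assoc ℂ U V W).toLinearMap
        ∘ₗ TensorProduct.map (braidMap r ρV.toOps ρU.toOps QVU)
            (LinearMap.id : W →ₗ[ℂ] W)
        ∘ₗ (TensorProduct.assoc ℂ V U W).symm.toLinearMap
        ∘ₗ TensorProduct.map (LinearMap.id : V →ₗ[ℂ] V)
            (braidMap r ρW.toOps ρU.toOps QWU)
        ∘ₗ (TensorProduct.assoc ℂ V W U).toLinearMap :=
  stmt11_general r ρV ρW ρU hV hW hU QVW hQVW QVU hQVU QWU hQWU QA hQA QB hQB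

end Unrolled
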